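/- Let G₁ be a pseudo strongly regular graph with parameters (n₁, k₁, μ₁) and G₂ a pseudo strongly regular graph with parameters (n₂, k₂, μ₂), where neither G₁ nor G₂ is complete (each contains a pair of distinct non-adjacent vertices). Then the join G₁ ∨ G₂ is pseudo strongly regular with parameters (n₁+n₂, k, μ) for some k and μ if and only if k₁ + n₂ = k₂ + n₁ and μ₁ + n₂ = μ₂ + n₁, in which case k = k₁ + n₂ and μ = μ₁ + n₂. -/

import Mathlib

open SimpleGraph

def SimpleGraph.IsPseudoSRG {V : Type*} [Fintype V] (G : SimpleGraph V) (n k m : ℕ) : Prop :=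
  Fintype.card V = n ∧ (∀ v : V, (G.neighborSet v).ncard = k) ∧
    ∀ u v : V, u ≠ v → ¬G.Adj u v → (G.commonNeighbors u v).ncard = m

/-- The join of two simple graphs on disjoint vertex sets. -/
def SimpleGraph.joinGraph {V₁ V₂ : Type*} (G₁ : SimpleGraph V₁) (G₂ : SimpleGraph V₂) :
    SimpleGraph (V₁ ⊕ V₂) where
  Adj x y := match x, y with
    | Sum.inl a, Sum.inl b => G₁.Adj a b
    | Sum.inr a, Sum.inr b => G₂.Adj a b
    | Sum.inl _, Sum.inr _ => True
    | Sum.inr _, Sum.inl _ => True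
  symm := by constructor; rintro (a | a) (b | b) h <;> first | exact h.symm | trivial
  loopless := by constructor; rintro (a | a) h <;> simp_all [SimpleGraph.irrefl]

/-
In `G₁ ∨ G₂` every vertex of one side is adjacent to all of the other side. So degrees and
common-neighbour counts of non-adjacent pairs inside `Gᵢ` grow by the order of the other graph,
and the only non-adjacent pairs lie within one side. The join is therefore pseudo strongly
regular exactly when the shifted parameters of the two sides agree; non-completeness supplies
a non-adjacent pair on each side, which forces the equation for `μ`.
-/

theorem Set.ncard_image_inl_union_image_inr {α β : Type*} [Finite α] [Finite β]
    (s : Set α) (t : Set β) :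
    (Sum.inl '' s ∪ Sum.inr '' t : Set (α ⊕ β)).ncard = s.ncard + t.ncard := by
  rw [Set.ncard_union_eq Set.disjoint_image_inl_image_inr,
    Set.ncard_image_of_injective _ Sum.inl_injective,
    Set.ncard_image_of_injective _ Sum.inr_injective]

namespace SimpleGraph

section joinGraph

variable {V₁ V₂ : Type*} (G₁ : SimpleGraph V₁) (G₂ : SimpleGraph V₂)

@[simp]
theorem joinGraph_adj_inl_inl (a b : V₁) :
    (G₁.joinGraph G₂).Adj (.inl a) (.inl b) ↔ G₁.Adj a b := Iff.rfl

@[simp]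
theorem joinGraph_adj_inr_inr (a b : V₂) :
    (G₁.joinGraph G₂).Adj (.inr a) (.inr b) ↔ G₂.Adj a b := Iff.rfl

@[simp]
theorem joinGraph_adj_inl_inr (a : V₁) (b : V₂) : (G₁.joinGraph G₂).Adj (.inl a) (.inr b) :=
  trivial

@[simp]
theorem joinGraph_adj_inr_inl (a : V₂) (b : V₁) : (G₁.joinGraph G₂).Adj (.inr a) (.inl b) :=
  trivial

theorem neighborSet_joinGraph_inl (a : V₁) :
    (G₁.joinGraph G₂).neighborSet (.inl a) = Sum.inl '' G₁.neighborSet a ∪ Sum.inr '' .univ := by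
  ext (x | x) <;> simp

theorem neighborSet_joinGraph_inr (a : V₂) :
    (G₁.joinGraph G₂).neighborSet (.inr a) = Sum.inl '' .univ ∪ Sum.inr '' G₂.neighborSet a := by
  ext (x | x) <;> simp

theorem commonNeighbors_joinGraph_inl (a b : V₁) :
    (G₁.joinGraph G₂).commonNeighbors (.inl a) (.inl b) =
      Sum.inl '' G₁.commonNeighbors a b ∪ Sum.inr '' .univ := by
  ext (x | x) <;> simp [commonNeighbors]

theorem commonNeighbors_joinGraph_inr (a b : V₂) :
    (G₁.joinGraph G₂).commonNeighbors (.inr a) (.inr b) =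
      Sum.inl '' .univ ∪ Sum.inr '' G₂.commonNeighbors a b := by
  ext (x | x) <;> simp [commonNeighbors]

variable [Finite V₁] [Finite V₂]

theorem ncard_neighborSet_joinGraph_inl (a : V₁) :
    ((G₁.joinGraph G₂).neighborSet (.inl a)).ncard = (G₁.neighborSet a).ncard + Nat.card V₂ := by
  rw [neighborSet_joinGraph_inl, Set.ncard_image_inl_union_image_inr, Set.ncard_univ]

theorem ncard_neighborSet_joinGraph_inr (a : V₂) :
    ((G₁.joinGraph G₂).neighborSet (.inr a)).ncard = (G₂.neighborSet a).ncard + Nat.card V₁ := by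
  rw [neighborSet_joinGraph_inr, Set.ncard_image_inl_union_image_inr, Set.ncard_univ, add_comm]

theorem ncard_commonNeighbors_joinGraph_inl (a b : V₁) :
    ((G₁.joinGraph G₂).commonNeighbors (.inl a) (.inl b)).ncard =
      (G₁.commonNeighbors a b).ncard + Nat.card V₂ := by
  rw [commonNeighbors_joinGraph_inl, Set.ncard_image_inl_union_image_inr, Set.ncard_univ]

theorem ncard_commonNeighbors_joinGraph_inr (a b : V₂) :
    ((G₁.joinGraph G₂).commonNeighbors (.inr a) (.inr b)).ncard =
      (G₂.commonNeighbors a b).ncard + Nat.card V₁ := by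
  rw [commonNeighbors_joinGraph_inr, Set.ncard_image_inl_union_image_inr, Set.ncard_univ,
    add_comm]

end joinGraph

namespace IsPseudoSRG

variable {V₁ V₂ : Type*} [Fintype V₁] [Fintype V₂] {G₁ : SimpleGraph V₁} {G₂ : SimpleGraph V₂}
  {n₁ k₁ m₁ n₂ k₂ m₂ : ℕ}

theorem joinGraph (h₁ : G₁.IsPseudoSRG n₁ k₁ m₁) (h₂ : G₂.IsPseudoSRG n₂ k₂ m₂)
    (hk : k₁ + n₂ = k₂ + n₁) (hm : m₁ + n₂ = m₂ + n₁) :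
    (G₁.joinGraph G₂).IsPseudoSRG (n₁ + n₂) (k₁ + n₂) (m₁ + n₂) := by
  obtain ⟨hn₁, hk₁, hm₁⟩ := h₁
  obtain ⟨hn₂, hk₂, hm₂⟩ := h₂
  rw [← Nat.card_eq_fintype_card] at hn₁ hn₂
  refine ⟨by simp [← Nat.card_eq_fintype_card, hn₁, hn₂], ?_, ?_⟩
  · rintro (a | a)
    · rw [ncard_neighborSet_joinGraph_inl, hk₁ a, hn₂]
    · rw [ncard_neighborSet_joinGraph_inr, hk₂ a, hn₁, hk]
  · rintro (a | a) (b | b) hab hadj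
    · rw [ncard_commonNeighbors_joinGraph_inl, hm₁ a b (by simpa using hab) hadj, hn₂]
    · exact absurd (joinGraph_adj_inl_inr G₁ G₂ a b) hadj
    · exact absurd (joinGraph_adj_inr_inl G₁ G₂ a b) hadj
    · rw [ncard_commonNeighbors_joinGraph_inr, hm₂ a b (by simpa using hab) hadj, hn₁, hm]

theorem params_eq_of_joinGraph (h₁ : G₁.IsPseudoSRG n₁ k₁ m₁) (h₂ : G₂.IsPseudoSRG n₂ k₂ m₂)
    (hnc₁ : ∃ a b : V₁, a ≠ b ∧ ¬G₁.Adj a b) (hnc₂ : ∃ a b : V₂, a ≠ b ∧ ¬G₂.Adj a b)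
    {n k m : ℕ} (h : (G₁.joinGraph G₂).IsPseudoSRG n k m) :
    k₁ + n₂ = k₂ + n₁ ∧ m₁ + n₂ = m₂ + n₁ := by
  obtain ⟨hn₁, hk₁, hm₁⟩ := h₁
  obtain ⟨hn₂, hk₂, hm₂⟩ := h₂
  obtain ⟨-, hk, hm⟩ := h
  rw [← Nat.card_eq_fintype_card] at hn₁ hn₂
  obtain ⟨a₁, b₁, hab₁, hadj₁⟩ := hnc₁
  obtain ⟨a₂, b₂, hab₂, hadj₂⟩ := hnc₂
  have hk_inl := hk (.inl a₁)
  have hk_inr := hk (.inr a₂)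
  have hm_inl := hm (.inl a₁) (.inl b₁) (by simpa using hab₁) (by simpa using hadj₁)
  have hm_inr := hm (.inr a₂) (.inr b₂) (by simpa using hab₂) (by simpa using hadj₂)
  rw [ncard_neighborSet_joinGraph_inl, hk₁, hn₂] at hk_inl
  rw [ncard_neighborSet_joinGraph_inr, hk₂, hn₁] at hk_inr
  rw [ncard_commonNeighbors_joinGraph_inl, hm₁ a₁ b₁ hab₁ hadj₁, hn₂] at hm_inl
  rw [ncard_commonNeighbors_joinGraph_inr, hm₂ a₂ b₂ hab₂ hadj₂, hn₁] at hm_inr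
  omega

end IsPseudoSRG

end SimpleGraph

/-- the join of two non-complete pseudo strongly regular graphs is pseudo strongly
regular with parameters `(n₁ + n₂, k, μ)` for some `k, μ` iff `k₁ + n₂ = k₂ + n₁` and
`μ₁ + n₂ = μ₂ + n₁`, in which case `k = k₁ + n₂` and `μ = μ₁ + n₂`. -/
theorem stmt_8 {V₁ V₂ : Type*} [Fintype V₁] [Fintype V₂]
    (G₁ : SimpleGraph V₁) (G₂ : SimpleGraph V₂) (n₁ k₁ m₁ n₂ k₂ m₂ : ℕ)
    (h₁ : G₁.IsPseudoSRG n₁ k₁ m₁) (h₂ : G₂.IsPseudoSRG n₂ k₂ m₂)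
    (hnc₁ : ∃ a b : V₁, a ≠ b ∧ ¬G₁.Adj a b) (hnc₂ : ∃ a b : V₂, a ≠ b ∧ ¬G₂.Adj a b) :
    ((∃ k m : ℕ, (G₁.joinGraph G₂).IsPseudoSRG (n₁ + n₂) k m) ↔
        (k₁ + n₂ = k₂ + n₁ ∧ m₁ + n₂ = m₂ + n₁)) ∧
      ((k₁ + n₂ = k₂ + n₁ ∧ m₁ + n₂ = m₂ + n₁) →
        (G₁.joinGraph G₂).IsPseudoSRG (n₁ + n₂) (k₁ + n₂) (m₁ + n₂)) := by
  have hjoin : (k₁ + n₂ = k₂ + n₁ ∧ m₁ + n₂ = m₂ + n₁) →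
      (G₁.joinGraph G₂).IsPseudoSRG (n₁ + n₂) (k₁ + n₂) (m₁ + n₂) :=
    fun ⟨hk, hm⟩ => h₁.joinGraph h₂ hk hm
  refine ⟨⟨?_, fun h => ⟨_, _, hjoin h⟩⟩, hjoin⟩
  rintro ⟨k, m, h⟩
  exact h₁.params_eq_of_joinGraph h₂ hnc₁ hnc₂ h
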